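/- Consider softmax weights A_j(θ) over logits Z_j(θ) = Σ_{r=1}^R κ_r cos(ω_r θ d_j), j = 1,…,T, with κ_r ≥ 0, ω_r > 0, and distances d_j ≥ 0. Let S ⊆ {1,…,T} and F its complement, with d_i ≤ d_j for all i ∈ S, j ∈ F. If θ ≤ π/(2 ω_max d_max) where ω_max = max_r ω_r and d_max = max_j d_j, then M_S(θ) := Σ_{i∈S} A_i(θ) satisfies dM_S/dθ ≥ 0. -/

import Mathlib

open Finset

/-- Softmax attention weight for the coherent-band RoPE logits
`Z_j(θ) = ∑ r, κ r * cos (ω r * θ * d j)`. -/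
noncomputable def ropeWeight {T R : ℕ} (κ ω : Fin R → ℝ) (d : Fin T → ℝ)
    (θ : ℝ) (j : Fin T) : ℝ :=
  Real.exp (∑ r : Fin R, κ r * Real.cos (ω r * θ * d j)) /
    ∑ j' : Fin T, Real.exp (∑ r : Fin R, κ r * Real.cos (ω r * θ * d j'))

lemma sinmul_mono {a t x y : ℝ} (ha : 0 < a) (ht : 0 ≤ t) (hx : 0 ≤ x)
    (hxy : x ≤ y) (hy : a * t * y ≤ Real.pi / 2) :
    Real.sin (a * t * x) * (a * x) ≤ Real.sin (a * t * y) * (a * y) := by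
  have hpi := Real.pi_pos
  have h0x : 0 ≤ a * t * x := by positivity
  have hxy' : a * t * x ≤ a * t * y :=
    mul_le_mul_of_nonneg_left hxy (by positivity)
  have h0y : 0 ≤ a * t * y := le_trans h0x hxy'
  have hs : Real.sin (a * t * x) ≤ Real.sin (a * t * y) :=
    Real.strictMonoOn_sin.monotoneOn ⟨by linarith, le_trans hxy' hy⟩
      ⟨by linarith, hy⟩ hxy'
  have hsx : 0 ≤ Real.sin (a * t * x) :=
    Real.sin_nonneg_of_nonneg_of_le_pi h0x (by linarith)
  have hsy : 0 ≤ Real.sin (a * t * y) :=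
    Real.sin_nonneg_of_nonneg_of_le_pi h0y (by linarith)
  calc Real.sin (a * t * x) * (a * x)
      ≤ Real.sin (a * t * y) * (a * x) :=
        mul_le_mul_of_nonneg_right hs (by positivity)
    _ ≤ Real.sin (a * t * y) * (a * y) := by
        apply mul_le_mul_of_nonneg_left (mul_le_mul_of_nonneg_left hxy ha.le) hsy

theorem stmt_5 {T R : ℕ} (hT : 0 < T) (hR : 0 < R)
    (κ ω : Fin R → ℝ) (d : Fin T → ℝ)
    (hκ : ∀ r, 0 ≤ κ r) (hω : ∀ r, 0 < ω r) (hd : ∀ j, 0 ≤ d j)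
    (S : Finset (Fin T)) (hnf : ∀ i ∈ S, ∀ j ∈ Sᶜ, d i ≤ d j)
    (θ : ℝ) (hθ0 : 0 ≤ θ)
    (hθ : θ ≤ Real.pi /
      (2 * (Finset.univ.sup' ⟨⟨0, hR⟩, Finset.mem_univ _⟩ ω) *
        (Finset.univ.sup' ⟨⟨0, hT⟩, Finset.mem_univ _⟩ d))) :
    0 ≤ deriv (fun t => ∑ i ∈ S, ropeWeight κ ω d t i) θ := by
  have hpi := Real.pi_pos
  haveI : Nonempty (Fin T) := ⟨⟨0, hT⟩⟩
  -- abbreviations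
  set A : Fin T → ℝ := fun j => Real.exp (∑ r : Fin R, κ r * Real.cos (ω r * θ * d j)) with hAdef
  set G : Fin T → ℝ := fun j => ∑ r : Fin R, κ r * (-Real.sin (ω r * θ * d j) * (ω r * 1 * d j)) with hGdef
  -- angle bound
  have hangle : ∀ (r : Fin R) (j : Fin T), ω r * θ * d j ≤ Real.pi / 2 := by
    intro r j
    set ωm := Finset.univ.sup' ⟨⟨0, hR⟩, Finset.mem_univ _⟩ ω with hωm
    set dm := Finset.univ.sup' ⟨⟨0, hT⟩, Finset.mem_univ _⟩ d with hdm
    have hωle : ω r ≤ ωm := Finset.le_sup' ω (Finset.mem_univ r)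
    have hdle : d j ≤ dm := Finset.le_sup' d (Finset.mem_univ j)
    have hωmpos : 0 < ωm := lt_of_lt_of_le (hω ⟨0, hR⟩) (Finset.le_sup' ω (Finset.mem_univ _))
    have hdm0 : 0 ≤ dm := le_trans (hd j) hdle
    rcases eq_or_lt_of_le hdm0 with h0 | hdmpos
    · have : d j = 0 := le_antisymm (h0 ▸ hdle) (hd j)
      rw [this]; nlinarith
    · have hden : 0 < 2 * ωm * dm := mul_pos (mul_pos two_pos hωmpos) hdmpos
      have hθ' : θ * (2 * ωm * dm) ≤ Real.pi := by
        rw [le_div_iff₀ hden] at hθ; exact hθ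
      have h1 : ω r * θ * d j ≤ ωm * θ * dm := by
        have h2 : ω r * θ ≤ ωm * θ := mul_le_mul_of_nonneg_right hωle hθ0
        have h3 : 0 ≤ ω r * θ := mul_nonneg (hω r).le hθ0
        calc ω r * θ * d j ≤ ω r * θ * dm := mul_le_mul_of_nonneg_left hdle h3
          _ ≤ ωm * θ * dm := mul_le_mul_of_nonneg_right h2 hdm0
      nlinarith
  -- monotonicity of G
  have hGmono : ∀ i ∈ S, ∀ j ∈ Sᶜ, G j ≤ G i := by
    intro i hi j hj
    apply Finset.sum_le_sum
    intro r _
    have hkey := sinmul_mono (hω r) hθ0 (hd i) (hnf i hi j hj) (hangle r j)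
    have hκr := hκ r
    nlinarith [hkey]
  -- derivatives
  have hZ : ∀ j : Fin T, HasDerivAt
      (fun t => ∑ r : Fin R, κ r * Real.cos (ω r * t * d j)) (G j) θ := by
    intro j
    apply HasDerivAt.fun_sum
    intro r _
    exact ((((hasDerivAt_id θ).const_mul (ω r)).mul_const (d j)).cos).const_mul (κ r)
  have hAder : ∀ j : Fin T, HasDerivAt
      (fun t => Real.exp (∑ r : Fin R, κ r * Real.cos (ω r * t * d j))) (A j * G j) θ :=
    fun j => (hZ j).exp
  have hWder : HasDerivAt
      (fun t => ∑ j' : Fin T, Real.exp (∑ r : Fin R, κ r * Real.cos (ω r * t * d j')))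
      (∑ j' : Fin T, A j' * G j') θ :=
    HasDerivAt.fun_sum (fun j _ => hAder j)
  have hWpos : 0 < ∑ j' : Fin T, A j' :=
    Finset.sum_pos (fun j _ => Real.exp_pos _) Finset.univ_nonempty
  set W : ℝ := ∑ j' : Fin T, A j' with hWdef
  set W' : ℝ := ∑ j' : Fin T, A j' * G j' with hW'def
  have hrat : ∀ i : Fin T, HasDerivAt (fun t => ropeWeight κ ω d t i)
      ((A i * G i * W - A i * W') / W ^ 2) θ := by
    intro i
    exact (hAder i).div hWder hWpos.ne'
  have hsum : HasDerivAt (fun t => ∑ i ∈ S, ropeWeight κ ω d t i)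
      (∑ i ∈ S, (A i * G i * W - A i * W') / W ^ 2) θ :=
    HasDerivAt.fun_sum (fun i _ => hrat i)
  have hApos : ∀ j : Fin T, 0 < A j := fun j => Real.exp_pos _
  rw [hsum.deriv]
  clear_value W' W
  clear_value G A
  rw [← Finset.sum_div]
  apply div_nonneg _ (sq_nonneg W)
  -- numerator
  have hnum : ∑ i ∈ S, (A i * G i * W - A i * W')
      = ∑ i ∈ S, ∑ j : Fin T, A i * A j * (G i - G j) := by
    apply Finset.sum_congr rfl
    intro i _
    rw [hWdef, hW'def, Finset.mul_sum, Finset.mul_sum, ← Finset.sum_sub_distrib]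
    apply Finset.sum_congr rfl
    intro j _
    ring
  rw [hnum]
  have hsplit : ∀ i : Fin T, ∑ j : Fin T, A i * A j * (G i - G j)
      = ∑ j ∈ S, A i * A j * (G i - G j) + ∑ j ∈ Sᶜ, A i * A j * (G i - G j) :=
    fun i => (Finset.sum_add_sum_compl S _).symm
  simp_rw [hsplit, Finset.sum_add_distrib]
  have hzero : ∑ i ∈ S, ∑ j ∈ S, A i * A j * (G i - G j) = 0 := by
    have h1 : ∑ i ∈ S, ∑ j ∈ S, A i * A j * (G i - G j)
        = ∑ j ∈ S, ∑ i ∈ S, A i * A j * (G i - G j) := Finset.sum_comm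
    have h2 : ∑ j ∈ S, ∑ i ∈ S, A i * A j * (G i - G j)
        = -∑ i ∈ S, ∑ j ∈ S, A i * A j * (G i - G j) := by
      rw [← Finset.sum_neg_distrib]
      apply Finset.sum_congr rfl
      intro i _
      rw [← Finset.sum_neg_distrib]
      apply Finset.sum_congr rfl
      intro j _
      ring
    linarith [h1, h2, h1.trans h2]
  rw [hzero, zero_add]
  apply Finset.sum_nonneg
  intro i hi
  apply Finset.sum_nonneg
  intro j hj
  have hGij := hGmono i hi j hj
  exact mul_nonneg (mul_nonneg (hApos i).le (hApos j).le) (sub_nonneg.2 hGij)
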